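/- arXiv:1605.05240 — 2 statements merged into one kernel-verified Lean document; each statement's English description precedes it below -/
import Mathlib

section
/- Let y be an element of a field of characteristic p > 3 with y ≠ 1/2, and set x = y(1−y). Then for every n ≥ 0, D_{n,k}(1,x) = [((k−1)−(k−2)y)·y^n − (1+(k−2)y)·(1−y)^n] / (2y−1). -/
/-
`E_n(1, x)` obeys `E_{n+2} = E_{n+1} - x E_n` by Pascal's rule. For `x = y(1-y)` the characteristic
polynomial `t² - t + y(1-y)` has roots `y` and `1 - y`, which gives
`(2y-1) E_n = y^{n+1} - (1-y)^{n+1}`. Splitting the coefficients of `D_{n,k}` shows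
`D_{n,k} = E_n + (k-1) x E_{n-2}` for `n ≥ 2`, and the closed form follows by substitution,
the cases `n = 0, 1` being direct.
-/

open Finset

/-- The `n`-th reversed Dickson polynomial of the `(k+1)`-th kind, evaluated at `(a, x)`.
For `n ≥ 1` it is `∑_{i=0}^{⌊n/2⌋} ((n-ki)/(n-i))·C(n-i,i)·(-x)^i·a^{n-2i}`, where the
integer coefficient `((n-ki)/(n-i))·C(n-i,i)` is written as
`k·C(n-i,i) - (k-1)·(n/(n-i))·C(n-i,i)` and `(n/(n-i))·C(n-i,i) = C(n-i,i) + C(n-i-1,i-1)`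
(equal to `1` when `i = 0`). For `n = 0` it is `2 - k`. -/
noncomputable def revDickson {F : Type*} [Field F] (k : ℤ) (n : ℕ) (a x : F) : F :=
  if n = 0 then ((2 - k : ℤ) : F) else
    ∑ i ∈ Finset.range (n / 2 + 1),
      ((k * ((n - i).choose i : ℤ) -
          (k - 1) * (if i = 0 then 1 else ((n - i).choose i : ℤ) + ((n - i - 1).choose (i - 1) : ℤ))) : F)
        * (-x) ^ i * a ^ (n - 2 * i)

section revDicksonE

variable {R : Type*} [CommRing R]

/-- The paper's `E_n(1, x) = ∑ C(n-i, i) (-x)^i`, summed over the antidiagonal `j + i = n` so that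
Pascal's rule yields its recurrence directly. -/
def revDicksonE (n : ℕ) (x : R) : R :=
  ∑ p ∈ antidiagonal n, (p.1.choose p.2 : R) * (-x) ^ p.2

@[simp]
lemma revDicksonE_zero (x : R) : revDicksonE 0 x = 1 := by
  simp [revDicksonE]

lemma revDicksonE_succ (n : ℕ) (x : R) :
    revDicksonE (n + 1) x =
      1 + ∑ p ∈ antidiagonal n, (p.1.choose (p.2 + 1) : R) * (-x) ^ (p.2 + 1) := by
  rw [revDicksonE, Nat.sum_antidiagonal_succ']
  simp

@[simp]
lemma revDicksonE_one (x : R) : revDicksonE 1 x = 1 := by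
  simp [revDicksonE_succ]

lemma revDicksonE_add_two (n : ℕ) (x : R) :
    revDicksonE (n + 2) x = revDicksonE (n + 1) x - x * revDicksonE n x := by
  have hshift : ∑ p ∈ antidiagonal n, (p.1.choose p.2 : R) * (-x) ^ (p.2 + 1) =
      -(x * revDicksonE n x) := by
    rw [revDicksonE, mul_sum, ← sum_neg_distrib]
    exact sum_congr rfl fun _ _ => by ring
  rw [revDicksonE_succ (n + 1), Nat.sum_antidiagonal_succ, revDicksonE_succ]
  simp only [Nat.choose_succ_succ', Nat.cast_add, add_mul, sum_add_distrib, hshift,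
    Nat.choose_zero_succ, Nat.cast_zero, zero_mul, zero_add]
  ring

lemma revDicksonE_eq_sum_range (n : ℕ) (x : R) :
    revDicksonE n x = ∑ i ∈ range (n / 2 + 1), ((n - i).choose i : R) * (-x) ^ i := by
  rw [revDicksonE, ← Nat.sum_antidiagonal_swap, Nat.sum_antidiagonal_eq_sum_range_succ_mk]
  symm
  refine sum_subset (range_subset_range.2 (by omega)) fun i hi hi' => ?_
  simp only [mem_range] at hi hi'
  rw [Nat.choose_eq_zero_of_lt (by omega), Nat.cast_zero, zero_mul]

lemma two_mul_sub_one_mul_revDicksonE (y : R) (n : ℕ) :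
    (2 * y - 1) * revDicksonE n (y * (1 - y)) = y ^ (n + 1) - (1 - y) ^ (n + 1) := by
  induction n using Nat.twoStepInduction with
  | zero => rw [revDicksonE_zero]; ring
  | one => rw [revDicksonE_one]; ring
  | more n ih₀ ih₁ =>
    rw [revDicksonE_add_two]
    linear_combination ih₁ - y * (1 - y) * ih₀

end revDicksonE

section revDickson

variable {F : Type*} [Field F]

lemma revDickson_zero (k : ℤ) (a x : F) : revDickson k 0 a x = 2 - k := by
  simp [revDickson]

lemma revDickson_one (k : ℤ) (a x : F) : revDickson k 1 a x = a := by
  simp [revDickson]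

/-- For `n ≥ 2` the coefficient of `(-x)^i` is `C(n-i, i) - (k-1) C(n-i-1, i-1)`, and the second
part is the shifted `E_{n-2}`. -/
lemma revDickson_add_two (k : ℤ) (n : ℕ) (x : F) :
    revDickson k (n + 2) 1 x = revDicksonE (n + 2) x + (k - 1) * x * revDicksonE n x := by
  rw [revDickson, if_neg (by omega), revDicksonE_eq_sum_range, revDicksonE_eq_sum_range,
    show (n + 2) / 2 = n / 2 + 1 by omega, mul_sum]
  simp only [sum_range_succ' _ (n / 2 + 1), Int.cast_natCast, Int.cast_ite, Int.cast_one,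
    Int.cast_add, mul_ite, mul_one, one_pow, Nat.reduceSubDiff, Nat.add_eq_zero_iff, one_ne_zero,
    and_false, ↓reduceIte, add_tsub_cancel_right, tsub_zero, Nat.choose_zero_right, Nat.cast_one,
    sub_sub_cancel, pow_zero]
  rw [add_right_comm, ← sum_add_distrib]
  refine congrArg (· + 1) (sum_congr rfl fun i _ => ?_)
  rw [show n + 1 - i - 1 = n - i by omega]
  ring

lemma revDickson_mul_two_mul_sub_one (k : ℤ) (y : F) (n : ℕ) :
    revDickson k n 1 (y * (1 - y)) * (2 * y - 1) =
      (((k : F) - 1) - ((k : F) - 2) * y) * y ^ n - (1 + ((k : F) - 2) * y) * (1 - y) ^ n := by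
  match n with
  | 0 => rw [revDickson_zero]; ring
  | 1 => rw [revDickson_one]; ring
  | n + 2 =>
    rw [revDickson_add_two]
    linear_combination two_mul_sub_one_mul_revDicksonE y (n + 2) +
      (k - 1) * y * (1 - y) * two_mul_sub_one_mul_revDicksonE y n

end revDickson

theorem stmt_4_general {F : Type*} [Field F] (k : ℤ) (y : F) (hy : y ≠ 1 / 2) (n : ℕ) :
    revDickson k n 1 (y * (1 - y)) =
      ((((k : F) - 1) - ((k : F) - 2) * y) * y ^ n
        - (1 + ((k : F) - 2) * y) * (1 - y) ^ n) / (2 * y - 1) := by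
  have hden : 2 * y - 1 ≠ 0 := fun h => hy <| by
    rw [eq_div_iff (left_ne_zero_of_mul_eq_one (sub_eq_zero.1 h))]
    linear_combination h
  exact eq_div_of_mul_eq hden (revDickson_mul_two_mul_sub_one k y n)

theorem stmt_4 {F : Type*} [Field F] {p : ℕ} [CharP F p]
    (hp : p.Prime) (h3 : 3 < p) (k : ℤ) (y : F) (hy : y ≠ 1 / 2) (n : ℕ) :
    revDickson k n 1 (y * (1 - y)) =
      ((((k : F) - 1) - ((k : F) - 2) * y) * y ^ n
        - (1 + ((k : F) - 2) * y) * (1 - y) ^ n) / (2 * y - 1) :=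
  stmt_4_general k y hy n
end

section
/- Let F_q have characteristic p > 3 and let 0 < s < ℓ be integers. Then for every x in F_q, D_{p^s+p^ℓ,k}(1,x) = (k/4)·((1−4x)^{(p^s−1)/2} + (1−4x)^{(p^ℓ−1)/2}) − ((k−2)/4)·(1 + (1−4x)^{(p^s+p^ℓ)/2}). -/
open Finset

/-!
Over an algebraic closure write `x = y (1 - y)`, so that `1 - 4x = (2y - 1)^2`. Splitting off
the dependence on `k`, `D_{n+2,k}(1, x) = E_{n+2}(x) + (k - 1) x E_n(x)`, where `E_n` is the
reversed Dickson polynomial of the second kind and `E_n(y (1 - y)) = ∑_{i ≤ n} y^i (1 - y)^(n - i)`.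
Hence `(2y - 1) D_{n,k}(1, y (1 - y)) = ((k - 1) - (k - 2) y) y^n - (1 + (k - 2) y) (1 - y)^n`.
For `n = p^s + p^l` the Frobenius makes `(1 - y)^(p^s) = 1 - y^(p^s)` and
`(2y - 1)^(p^s) = 2 y^(p^s) - 1`, so after multiplying by `2y - 1` the claim becomes a polynomial
identity in `y`, `y^(p^s)`, `y^(p^l)`. At the double root `y = 1/2` one has `E_n = (n + 1) y^n`
instead, and `p ∣ n` finishes.
-/

lemma sum_range_div_two_eq_sum_antidiagonal {M : Type*} [AddCommMonoid M] (n : ℕ)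
    (f : ℕ → ℕ → M) (hf : ∀ a b, a < b → f a b = 0) :
    ∑ i ∈ range (n / 2 + 1), f (n - i) i = ∑ p ∈ antidiagonal n, f p.1 p.2 := by
  rw [← Nat.sum_antidiagonal_swap]
  simp only [Prod.fst_swap, Prod.snd_swap]
  rw [Nat.sum_antidiagonal_eq_sum_range_succ (fun a b => f b a)]
  refine sum_subset (range_subset_range.mpr (by omega)) fun i hin hi => hf _ _ ?_
  simp only [mem_range] at hin hi
  omega

section SecondKind

variable {R : Type*} [CommRing R]

/-- The reversed Dickson polynomial `E_n(1, x)` of the second kind, i.e. `revDickson 1 n 1 x`. -/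
def revDicksonSecondKind (n : ℕ) (x : R) : R :=
  ∑ ij ∈ antidiagonal n, (ij.1.choose ij.2 : R) * (-x) ^ ij.2

@[simp]
lemma revDicksonSecondKind_zero (x : R) : revDicksonSecondKind 0 x = 1 := by
  simp [revDicksonSecondKind]

@[simp]
lemma revDicksonSecondKind_one (x : R) : revDicksonSecondKind 1 x = 1 := by
  simp [revDicksonSecondKind, Nat.antidiagonal_succ]

lemma revDicksonSecondKind_add_two (n : ℕ) (x : R) :
    revDicksonSecondKind (n + 2) x =
      revDicksonSecondKind (n + 1) x - x * revDicksonSecondKind n x := by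
  have shift : ∑ p ∈ antidiagonal n, (p.1.choose p.2 : R) * (-x) ^ (p.2 + 1) =
      -(x * revDicksonSecondKind n x) := by
    rw [revDicksonSecondKind, mul_sum, ← sum_neg_distrib]
    exact sum_congr rfl fun _ _ => by ring
  rw [revDicksonSecondKind, Nat.sum_antidiagonal_succ', Nat.sum_antidiagonal_succ,
    revDicksonSecondKind, Nat.sum_antidiagonal_succ']
  simp only [Nat.choose_succ_succ', Nat.cast_add, add_mul, sum_add_distrib, shift,
    Nat.choose_zero_succ, Nat.choose_zero_right, Nat.cast_zero, zero_mul, zero_add]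
  ring

lemma revDicksonSecondKind_mul_one_sub (n : ℕ) (y : R) :
    revDicksonSecondKind n (y * (1 - y)) = ∑ i ∈ range (n + 1), y ^ i * (1 - y) ^ (n - i) := by
  have peel (m : ℕ) : ∑ i ∈ range (m + 2), y ^ i * (1 - y) ^ (m + 1 - i) =
      y ^ (m + 1) + (1 - y) * ∑ i ∈ range (m + 1), y ^ i * (1 - y) ^ (m - i) :=
    geom_sum₂_succ_eq y (1 - y)
  induction n using Nat.twoStepInduction with
  | zero => simp
  | one => simp [sum_range_succ]
  | more n ih₀ ih₁ =>
    rw [revDicksonSecondKind_add_two, ih₀, ih₁, peel (n + 1), peel n]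
    ring

lemma two_mul_sub_one_mul_revDicksonSecondKind (n : ℕ) (y : R) :
    (2 * y - 1) * revDicksonSecondKind n (y * (1 - y)) = y ^ (n + 1) - (1 - y) ^ (n + 1) := by
  rw [revDicksonSecondKind_mul_one_sub, ← geom_sum₂_mul, Nat.add_sub_cancel]
  ring

lemma revDicksonSecondKind_of_two_mul_eq_one {y : R} (hy : 2 * y = 1) (n : ℕ) :
    revDicksonSecondKind n (y * (1 - y)) = (n + 1) * y ^ n := by
  have hy' : 1 - y = y := by linear_combination -hy
  rw [revDicksonSecondKind_mul_one_sub, hy', sum_congr rfl fun i hi => by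
    rw [← pow_add, Nat.add_sub_cancel' (Nat.lt_succ_iff.mp (mem_range.mp hi))]]
  simp

end SecondKind

section Field

variable {F : Type*} [Field F]

lemma revDickson_add_two_eq_revDicksonSecondKind (k : ℤ) (n : ℕ) (x : F) :
    revDickson k (n + 2) 1 x =
      revDicksonSecondKind (n + 2) x + (k - 1) * x * revDicksonSecondKind n x := by
  have hE (m : ℕ) :
      revDicksonSecondKind m x = ∑ i ∈ range (m / 2 + 1), ((m - i).choose i : F) * (-x) ^ i :=
    (sum_range_div_two_eq_sum_antidiagonal m (fun a b => (a.choose b : F) * (-x) ^ b)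
      fun a b h => by simp [Nat.choose_eq_zero_of_lt h]).symm
  rw [revDickson, if_neg (by omega), hE, hE, show (n + 2) / 2 + 1 = n / 2 + 1 + 1 by omega]
  conv_lhs => rw [sum_range_succ']
  rw [sum_range_succ' (fun i => ((n + 2 - i).choose i : F) * (-x) ^ i), mul_sum, add_right_comm,
    ← sum_add_distrib]
  congr 1
  · refine sum_congr rfl fun i _ => ?_
    rw [if_neg (by omega), show n + 2 - (i + 1) - 1 = n - i by omega, Nat.add_sub_cancel]
    push_cast
    ring
  · simp

lemma two_mul_sub_one_mul_revDickson_add_two (k : ℤ) (n : ℕ) (y : F) :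
    (2 * y - 1) * revDickson k (n + 2) 1 (y * (1 - y)) =
      (k - 1 - (k - 2) * y) * y ^ (n + 2) - (1 + (k - 2) * y) * (1 - y) ^ (n + 2) := by
  rw [revDickson_add_two_eq_revDicksonSecondKind]
  linear_combination two_mul_sub_one_mul_revDicksonSecondKind (n + 2) y +
    (k - 1) * y * (1 - y) * two_mul_sub_one_mul_revDicksonSecondKind n y

lemma revDickson_add_two_of_two_mul_eq_one (k : ℤ) (n : ℕ) {y : F} (hy : 2 * y = 1) :
    revDickson k (n + 2) 1 (y * (1 - y)) = (k * ((n + 2 : ℕ) : F) - k + 2) * y ^ (n + 2) := by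
  have hy' : 1 - y = y := by linear_combination -hy
  rw [revDickson_add_two_eq_revDicksonSecondKind, revDicksonSecondKind_of_two_mul_eq_one hy,
    revDicksonSecondKind_of_two_mul_eq_one hy, hy']
  push_cast
  ring

end Field

section CharP

variable {K : Type*} [Field K] {p : ℕ} [Fact p.Prime] [CharP K p]

lemma two_mul_sub_one_pow_char_pow (y : K) (m : ℕ) :
    (2 * y - 1) ^ p ^ m = 2 * y ^ p ^ m - 1 := by
  rw [show 2 * y - 1 = y - (1 - y) by ring, sub_pow_char_pow, sub_pow_char_pow, one_pow]
  ring

lemma revDickson_char_pow_add_char_pow_of_two_mul_eq_one (k : ℤ) {s l : ℕ} (hs : s ≠ 0)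
    (hl : l ≠ 0) {y : K} (hy : 2 * y = 1) :
    revDickson k (p ^ s + p ^ l) 1 (y * (1 - y)) = (2 - k) * y ^ 2 := by
  obtain ⟨n, hn⟩ : ∃ n, p ^ s + p ^ l = n + 2 :=
    ⟨p ^ s + p ^ l - 2, by
      have := one_lt_pow₀ (Fact.out : p.Prime).one_lt hs
      have := one_lt_pow₀ (Fact.out : p.Prime).one_lt hl
      omega⟩
  have hD := revDickson_add_two_of_two_mul_eq_one k n hy
  rw [← hn] at hD
  have hcast : ((p ^ s + p ^ l : ℕ) : K) = 0 :=
    (CharP.cast_eq_zero_iff K p _).2 (dvd_add (dvd_pow_self p hs) (dvd_pow_self p hl))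
  have hfix (m : ℕ) : 2 * y ^ p ^ m = 1 := by
    have := two_mul_sub_one_pow_char_pow (p := p) y m
    rw [sub_eq_zero.2 hy, zero_pow (pow_ne_zero m (Fact.out : p.Prime).ne_zero)] at this
    linear_combination -this
  rw [hD, hcast, pow_add]
  linear_combination (2 - k) * (-(y ^ p ^ s * y ^ p ^ l * (1 + 2 * y)) * hy +
    2 * y ^ 2 * y ^ p ^ s * hfix l + y ^ 2 * hfix s)

lemma revDickson_char_pow_add_char_pow_of_two_mul_sub_one_ne_zero (hp : p ≠ 2) (k : ℤ)
    (s l : ℕ) {y : K} (hy : 2 * y - 1 ≠ 0) :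
    revDickson k (p ^ s + p ^ l) 1 (y * (1 - y)) =
      (k : K) / 4 * (((2 * y - 1) ^ 2) ^ ((p ^ s - 1) / 2) +
          ((2 * y - 1) ^ 2) ^ ((p ^ l - 1) / 2))
        - ((k : K) - 2) / 4 * (1 + ((2 * y - 1) ^ 2) ^ ((p ^ s + p ^ l) / 2)) := by
  have h2 : (2 : K) ≠ 0 := Ring.two_ne_zero (by rwa [ringChar.eq K p])
  have h4 : (4 : K) ≠ 0 := by
    rw [show (4 : K) = 2 * 2 by norm_num]
    exact mul_ne_zero h2 h2
  have hodd (m : ℕ) : Odd (p ^ m) := ((Fact.out : p.Prime).odd_of_ne_two hp).pow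
  obtain ⟨n, hn⟩ : ∃ n, p ^ s + p ^ l = n + 2 :=
    ⟨p ^ s + p ^ l - 2, by obtain ⟨i, hi⟩ := hodd s; obtain ⟨j, hj⟩ := hodd l; omega⟩
  have hD := two_mul_sub_one_mul_revDickson_add_two k n y
  rw [← hn, pow_add, pow_add, sub_pow_char_pow, sub_pow_char_pow, one_pow, one_pow] at hD
  have hhalf (m : ℕ) :
      ((2 * y - 1) ^ 2) ^ ((p ^ m - 1) / 2) * (2 * y - 1) = 2 * y ^ p ^ m - 1 := by
    obtain ⟨j, hj⟩ := hodd m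
    rw [← pow_mul, ← pow_succ, ← two_mul_sub_one_pow_char_pow, hj]
    congr 1
    omega
  have hfull : ((2 * y - 1) ^ 2) ^ ((p ^ s + p ^ l) / 2) =
      (2 * y ^ p ^ s - 1) * (2 * y ^ p ^ l - 1) := by
    obtain ⟨i, hi⟩ := hodd s
    obtain ⟨j, hj⟩ := hodd l
    rw [← pow_mul, ← two_mul_sub_one_pow_char_pow, ← two_mul_sub_one_pow_char_pow, ← pow_add,
      hi, hj]
    congr 1
    omega
  apply mul_left_cancel₀ hy
  rw [hD, hfull]
  field_simp
  linear_combination -(k : K) * hhalf s - k * hhalf l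

lemma revDickson_char_pow_add_char_pow (hp : p ≠ 2) (k : ℤ) {s l : ℕ} (hs : s ≠ 0) (hl : l ≠ 0)
    (y : K) :
    revDickson k (p ^ s + p ^ l) 1 (y * (1 - y)) =
      (k : K) / 4 * ((1 - 4 * (y * (1 - y))) ^ ((p ^ s - 1) / 2) +
          (1 - 4 * (y * (1 - y))) ^ ((p ^ l - 1) / 2))
        - ((k : K) - 2) / 4 * (1 + (1 - 4 * (y * (1 - y))) ^ ((p ^ s + p ^ l) / 2)) := by
  rw [show 1 - 4 * (y * (1 - y)) = (2 * y - 1) ^ 2 by ring]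
  by_cases hy : 2 * y = 1
  · have hp3 : 3 ≤ p := by have := (Fact.out : p.Prime).two_le; omega
    have hs3 : 3 ≤ p ^ s := hp3.trans (Nat.le_self_pow hs p)
    have hl3 : 3 ≤ p ^ l := hp3.trans (Nat.le_self_pow hl p)
    rw [revDickson_char_pow_add_char_pow_of_two_mul_eq_one k hs hl hy, sub_eq_zero.2 hy,
      zero_pow two_ne_zero, zero_pow (by omega), zero_pow (by omega), zero_pow (by omega)]
    have h4 : (4 : K) ≠ 0 :=
      left_ne_zero_of_mul_eq_one (b := y ^ 2) (by linear_combination (2 * y + 1) * hy)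
    field_simp
    linear_combination (2 - k) * (2 * y + 1) * hy
  · exact revDickson_char_pow_add_char_pow_of_two_mul_sub_one_ne_zero hp k s l
      (fun h => hy (sub_eq_zero.1 h))

end CharP

lemma exists_eq_mul_one_sub {K : Type*} [Field K] [IsAlgClosed K] (x : K) :
    ∃ y, x = y * (1 - y) := by
  have hdeg : (Polynomial.X ^ 2 - Polynomial.X + Polynomial.C x).degree = 2 := by
    compute_degree!
  obtain ⟨y, hy⟩ := IsAlgClosed.exists_root _ (by rw [hdeg]; decide)
  refine ⟨y, ?_⟩
  simp only [Polynomial.IsRoot, Polynomial.eval_add, Polynomial.eval_sub, Polynomial.eval_pow,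
    Polynomial.eval_X, Polynomial.eval_C] at hy
  linear_combination hy

lemma map_revDickson {F K : Type*} [Field F] [Field K] (φ : F →+* K) (k : ℤ) (n : ℕ) (a x : F) :
    φ (revDickson k n a x) = revDickson k n (φ a) (φ x) := by
  simp only [revDickson, apply_ite φ, map_intCast, map_sum, map_mul, map_pow, map_neg, map_sub,
    map_one]

theorem stmt_11_general {F : Type*} [Field F] {p : ℕ} [CharP F p]
    (hp : p.Prime) (h3 : 3 < p) (k : ℤ) (s l : ℕ) (hs : 0 < s) (hsl : s < l) (x : F) :
    revDickson k (p ^ s + p ^ l) 1 x =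
      (k : F) / 4 * ((1 - 4 * x) ^ ((p ^ s - 1) / 2) + (1 - 4 * x) ^ ((p ^ l - 1) / 2))
        - ((k : F) - 2) / 4 * (1 + (1 - 4 * x) ^ ((p ^ s + p ^ l) / 2)) := by
  have : Fact p.Prime := ⟨hp⟩
  let φ := algebraMap F (AlgebraicClosure F)
  obtain ⟨y, hy⟩ := exists_eq_mul_one_sub (φ x)
  apply φ.injective
  simp only [map_revDickson, map_sub, map_mul, map_add, map_div₀, map_pow, map_one, map_ofNat,
    map_intCast, hy]
  exact revDickson_char_pow_add_char_pow (by omega) k hs.ne' (by omega) y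

theorem stmt_11 {F : Type*} [Field F] [Fintype F] {p : ℕ} [CharP F p]
    (hp : p.Prime) (h3 : 3 < p) (k : ℤ) (s l : ℕ) (hs : 0 < s) (hsl : s < l) (x : F) :
    revDickson k (p ^ s + p ^ l) 1 x =
      (k : F) / 4 * ((1 - 4 * x) ^ ((p ^ s - 1) / 2) + (1 - 4 * x) ^ ((p ^ l - 1) / 2))
        - ((k : F) - 2) / 4 * (1 + (1 - 4 * x) ^ ((p ^ s + p ^ l) / 2)) :=
  stmt_11_general hp h3 k s l hs hsl x
end
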